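/- Let G be a connected undirected graph containing a cycle, which is not arbitrarily regularizable. Then the system Bw = re has infinitely many solutions with w ≠ 0 and r = 0. -/

import Mathlib

/-!
Weight the edges of a walk of length `ℓ` from `u` to `v` alternately by `+1` and `-1`; the
incidence matrix `B` sends this weighting to `e_u - (-1)^ℓ e_v`. An even cycle therefore gives a
nonzero null solution, and so do all its nonzero multiples. An odd cycle is excluded: in a
connected graph it yields an odd closed walk at every vertex `u`, whose halved weighting is sent
to `e_u`; summing over `u` gives `B w = e`, so `G` would be arbitrarily regularizable.
-/

open Matrix BigOperators

/-- An undirected graph is arbitrarily regularizable if there is a real weighting of its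
edges, not identically zero, and `r > 0`, such that `B w = r e` where `B` is the
incidence matrix. -/
def ArbReg {V : Type*} [Fintype V] [DecidableEq V] (G : SimpleGraph V) : Prop :=
  ∃ (w : Sym2 V → ℝ) (r : ℝ), 0 < r ∧ w ≠ 0 ∧ (∀ e ∉ G.edgeSet, w e = 0) ∧
    (haveI := Classical.decRel G.Adj; G.incMatrix ℝ) *ᵥ w = fun _ => r

theorem infinite_setOf_ne_zero_of_forall_smul {K E : Type*} [Field K] [Infinite K]
    [AddCommGroup E] [Module K E] {P : E → Prop} {v : E} (hv : v ≠ 0)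
    (hP : ∀ t : K, P (t • v)) : {w | w ≠ 0 ∧ P w}.Infinite := by
  refine (((Set.finite_singleton 0).infinite_compl).image (smul_left_injective K hv).injOn).mono ?_
  rintro _ ⟨t, ht, rfl⟩
  exact ⟨smul_ne_zero ht hv, hP t⟩

namespace SimpleGraph

theorem Connected.exists_odd_length_closed_walk {V : Type*} {G : SimpleGraph V} (hG : G.Connected)
    {u : V} {c : G.Walk u u} (hc : Odd c.length) (w : V) : ∃ q : G.Walk w w, Odd q.length := by
  obtain ⟨p⟩ := hG.preconnected u w
  refine ⟨(p.reverse.append c).append p, ?_⟩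
  rw [Walk.length_append, Walk.length_append, Walk.length_reverse, add_right_comm, ← two_mul]
  exact (even_two_mul _).add_odd hc

variable {V : Type*} [DecidableEq V] {G : SimpleGraph V} (R : Type*) [Ring R]

theorem incMatrix_mulVec_single_of_adj [Fintype V] [DecidableRel G.Adj] {a b : V}
    (h : G.Adj a b) : G.incMatrix R *ᵥ Pi.single s(a, b) 1 = Pi.single a 1 + Pi.single b 1 := by
  ext i
  simp only [mulVec_single_one, col_apply, incMatrix_apply', mk'_mem_incidenceSet_iff]
  obtain rfl | hia := eq_or_ne i a
  · simp [h, G.ne_of_adj h]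
  · simp [h, hia, Pi.single_apply]

namespace Walk

def alternatingWeight : {u v : V} → G.Walk u v → Sym2 V → R
  | _, _, nil => 0
  | _, _, cons (u := a) (v := b) _ p => Pi.single s(a, b) 1 - alternatingWeight p

variable {R} {u v : V}

@[simp]
theorem alternatingWeight_nil : (nil : G.Walk u u).alternatingWeight R = 0 := rfl

@[simp]
theorem alternatingWeight_cons {w : V} (h : G.Adj u v) (p : G.Walk v w) :
    (cons h p).alternatingWeight R = Pi.single s(u, v) 1 - p.alternatingWeight R := rfl

theorem alternatingWeight_eq_zero_of_notMem_edges (p : G.Walk u v) {e : Sym2 V}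
    (he : e ∉ p.edges) : p.alternatingWeight R e = 0 := by
  induction p with
  | nil => rfl
  | cons h q ih =>
    rw [edges_cons, List.mem_cons, not_or] at he
    simp [he.1, ih he.2]

theorem alternatingWeight_eq_zero_of_notMem_edgeSet (p : G.Walk u v) {e : Sym2 V}
    (he : e ∉ G.edgeSet) : p.alternatingWeight R e = 0 :=
  p.alternatingWeight_eq_zero_of_notMem_edges fun hp => he (p.edges_subset_edgeSet hp)

theorem IsTrail.alternatingWeight_cons_self [Nontrivial R] {w : V} {h : G.Adj u v}
    {p : G.Walk v w} (hp : (cons h p).IsTrail) : (cons h p).alternatingWeight R s(u, v) = 1 := by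
  have hnotMem : s(u, v) ∉ p.edges := (List.nodup_cons.1 (edges_cons h p ▸ hp.edges_nodup)).1
  simp [alternatingWeight_eq_zero_of_notMem_edges p hnotMem]

theorem IsCycle.alternatingWeight_ne_zero [Nontrivial R] {c : G.Walk u u} (hc : c.IsCycle) :
    c.alternatingWeight R ≠ 0 := by
  cases c with
  | nil => exact absurd hc (by simp)
  | cons h p => exact fun h0 => by simpa [h0] using hc.isTrail.alternatingWeight_cons_self (R := R)

variable [Fintype V] [DecidableRel G.Adj]

theorem incMatrix_mulVec_alternatingWeight (p : G.Walk u v) :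
    G.incMatrix R *ᵥ p.alternatingWeight R =
      Pi.single u 1 - (-1) ^ p.length • Pi.single v 1 := by
  induction p with
  | nil => simp
  | cons h q ih =>
    rw [alternatingWeight_cons, mulVec_sub, incMatrix_mulVec_single_of_adj R h, ih, length_cons,
      pow_succ, mul_neg_one, neg_smul]
    abel

theorem incMatrix_mulVec_alternatingWeight_of_even {c : G.Walk u u} (hc : Even c.length) :
    G.incMatrix R *ᵥ c.alternatingWeight R = 0 := by
  rw [incMatrix_mulVec_alternatingWeight, hc.neg_one_pow, one_smul, sub_self]

theorem incMatrix_mulVec_alternatingWeight_of_odd {c : G.Walk u u} (hc : Odd c.length) :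
    G.incMatrix R *ᵥ c.alternatingWeight R = Pi.single u 2 := by
  rw [incMatrix_mulVec_alternatingWeight, hc.neg_one_pow, neg_one_smul, sub_neg_eq_add,
    ← Pi.single_add, one_add_one_eq_two]

end Walk

theorem Connected.arbReg_of_odd_length [Fintype V] (hG : G.Connected) {u : V}
    {c : G.Walk u u} (hc : Odd c.length) : ArbReg G := by
  classical
  choose q hq using hG.exists_odd_length_closed_walk hc
  set W : Sym2 V → ℝ := ∑ w, (2⁻¹ : ℝ) • (q w).alternatingWeight ℝ
  have hBW : G.incMatrix ℝ *ᵥ W = fun _ => 1 := by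
    simp only [W, mulVec_sum, mulVec_smul, Walk.incMatrix_mulVec_alternatingWeight_of_odd (hq _)]
    simp_rw [← Pi.single_smul', smul_eq_mul, inv_mul_cancel₀ (two_ne_zero' ℝ)]
    exact LinearMap.sum_single_apply _ fun _ => 1
  refine ⟨W, 1, one_pos, fun hW => ?_, fun e he => ?_, hBW⟩
  · simpa [hW] using congrFun hBW u
  · simp [W, Walk.alternatingWeight_eq_zero_of_notMem_edgeSet _ he]

end SimpleGraph

/-- For a connected cyclic graph that is not arbitrarily regularizable, the system
`B w = r e` has infinitely many solutions with `w ≠ 0` and `r = 0`. -/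
theorem cyclic_not_arb_reg_infinitely_many_null_solutions
    {V : Type*} [Fintype V] [DecidableEq V] (G : SimpleGraph V)
    (hc : G.Connected) (hcy : ¬ G.IsAcyclic) (hnr : ¬ ArbReg G) :
    {w : Sym2 V → ℝ | w ≠ 0 ∧ (∀ e ∉ G.edgeSet, w e = 0) ∧
      (haveI := Classical.decRel G.Adj; G.incMatrix ℝ) *ᵥ w = fun _ => (0 : ℝ)}.Infinite := by
  classical
  obtain ⟨v, c, hcyc⟩ : ∃ (v : V) (c : G.Walk v v), c.IsCycle := by
    simpa [SimpleGraph.IsAcyclic] using hcy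
  obtain heven | hodd := Nat.even_or_odd c.length
  · refine infinite_setOf_ne_zero_of_forall_smul (K := ℝ)
      (hcyc.alternatingWeight_ne_zero (R := ℝ)) fun t => ⟨fun e he => ?_, ?_⟩
    · simp [c.alternatingWeight_eq_zero_of_notMem_edgeSet he]
    · rw [mulVec_smul, c.incMatrix_mulVec_alternatingWeight_of_even heven, smul_zero]
      rfl
  · exact absurd (hc.arbReg_of_odd_length hodd) hnr
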